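/- arXiv:2510.03912 — 3 statements merged into one kernel-verified Lean document; each statement's English description precedes it below -/
import Mathlib

section
/- Let Φ and U be random d×M real matrices and V a random M×M real matrix on a probability space, with V almost surely symmetric positive definite. Assume all entries of Φ Uᵀ, Φ V Φᵀ and U V⁻¹ Uᵀ are integrable. Set W = E[Φ Uᵀ], Σ = E[Φ V Φᵀ] and G = E[U V⁻¹ Uᵀ], and assume W is invertible, Σ is positive definite and G is invertible. Then W⁻¹ Σ (W⁻¹)ᵀ ⪰ G⁻¹ in the Loewner order. (This is the efficiency bound underlying Theorem 1(2): among all generalized estimating equations indexed by Φ, the asymptotic covariance sandwich W⁻¹(Φ)Σ(Φ)W⁻¹(Φ)ᵀ is bounded below by the one attained at the optimal choice.) -/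
open MeasureTheory Matrix

/-- Entrywise expectation of a random matrix. -/
noncomputable def matExp {Ω : Type*} [MeasurableSpace Ω] (μ : Measure Ω)
    {m n : Type*} (f : Ω → Matrix m n ℝ) : Matrix m n ℝ :=
  Matrix.of fun i j => ∫ ω, f ω i j ∂μ

/-!
Pointwise, the block matrix `[[Φ V Φᵀ, Φ Uᵀ], [U Φᵀ, U V⁻¹ Uᵀ]]` is `X V Xᵀ` with `X = [Φ; U V⁻¹]`,
hence positive semidefinite, and so is its expectation `[[Σ, W], [Wᵀ, G]]`. As `G` is positive
definite, the Schur complement `Σ - W G⁻¹ Wᵀ` is positive semidefinite (a matrix Cauchy–Schwarz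
inequality for `Φ V^½` and `U V^-½`), and conjugating it by `W⁻¹` gives the bound.
-/

namespace Matrix

lemma PosDef.posSemidef_fromBlocks_mul_transpose {m n k : Type*} [Fintype m] [Fintype n]
    [Fintype k] [DecidableEq k] {V : Matrix k k ℝ} (hV : V.PosDef)
    (A : Matrix m k ℝ) (B : Matrix n k ℝ) :
    (fromBlocks (A * V * Aᵀ) (A * Bᵀ) (B * Aᵀ) (B * V⁻¹ * Bᵀ)).PosSemidef := by
  have hVdet : IsUnit V.det := (isUnit_iff_isUnit_det V).mp hV.isUnit
  have hVinv_symm : (V⁻¹)ᵀ = V⁻¹ := by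
    rw [transpose_nonsing_inv, ← conjTranspose_eq_transpose_of_trivial, hV.isHermitian.eq]
  have hgram : fromRows A (B * V⁻¹) * V * (fromRows A (B * V⁻¹))ᵀ =
      fromBlocks (A * V * Aᵀ) (A * Bᵀ) (B * Aᵀ) (B * V⁻¹ * Bᵀ) := by
    rw [fromRows_mul, transpose_fromRows, fromRows_mul_fromCols, transpose_mul, hVinv_symm]
    simp only [Matrix.mul_assoc, mul_nonsing_inv_cancel_left _ _ hVdet,
      nonsing_inv_mul_cancel_left _ _ hVdet]
  simpa only [hgram, conjTranspose_eq_transpose_of_trivial] using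
    hV.posSemidef.mul_mul_conjTranspose_same (fromRows A (B * V⁻¹))

lemma PosSemidef.inv_mul_mul_inv_transpose_sub {n : Type*} [Fintype n] [DecidableEq n]
    {S H W : Matrix n n ℝ} (hW : IsUnit W) (h : (S - W * H * Wᵀ).PosSemidef) :
    (W⁻¹ * S * W⁻¹ᵀ - H).PosSemidef := by
  have hWdet : IsUnit W.det := (isUnit_iff_isUnit_det W).mp hW
  have hcancel : W⁻¹ * (W * H * Wᵀ) * W⁻¹ᵀ = H := by
    rw [Matrix.mul_assoc W, nonsing_inv_mul_cancel_left _ _ hWdet, Matrix.mul_assoc,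
      ← transpose_mul, nonsing_inv_mul _ hWdet, transpose_one, Matrix.mul_one]
  simpa only [conjTranspose_eq_transpose_of_trivial, Matrix.mul_sub, Matrix.sub_mul, hcancel]
    using h.mul_mul_conjTranspose_same W⁻¹

end Matrix

section MatExp

variable {Ω : Type*} [MeasurableSpace Ω] {μ : Measure Ω} {m n k l : Type*}

lemma matExp_congr_ae {f g : Ω → Matrix m n ℝ} (h : f =ᵐ[μ] g) : matExp μ f = matExp μ g := by
  ext i j
  exact integral_congr_ae (h.mono fun ω hω => congrFun₂ hω i j)

lemma matExp_transpose (f : Ω → Matrix m n ℝ) :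
    matExp μ (fun ω => (f ω)ᵀ) = (matExp μ f)ᵀ :=
  rfl

lemma matExp_fromBlocks (A : Ω → Matrix m k ℝ) (B : Ω → Matrix m l ℝ)
    (C : Ω → Matrix n k ℝ) (D : Ω → Matrix n l ℝ) :
    matExp μ (fun ω => fromBlocks (A ω) (B ω) (C ω) (D ω)) =
      fromBlocks (matExp μ A) (matExp μ B) (matExp μ C) (matExp μ D) := by
  ext (i | i) (j | j) <;> rfl

lemma integrable_fromBlocks_apply {A : Ω → Matrix m k ℝ} {B : Ω → Matrix m l ℝ}
    {C : Ω → Matrix n k ℝ} {D : Ω → Matrix n l ℝ}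
    (hA : ∀ i j, Integrable (fun ω => A ω i j) μ) (hB : ∀ i j, Integrable (fun ω => B ω i j) μ)
    (hC : ∀ i j, Integrable (fun ω => C ω i j) μ) (hD : ∀ i j, Integrable (fun ω => D ω i j) μ) :
    ∀ i j, Integrable (fun ω => fromBlocks (A ω) (B ω) (C ω) (D ω) i j) μ := by
  rintro (i | i) (j | j)
  exacts [hA i j, hB i j, hC i j, hD i j]

lemma dotProduct_matExp_mulVec [Fintype m] [Fintype n] {f : Ω → Matrix m n ℝ}
    (hf : ∀ i j, Integrable (fun ω => f ω i j) μ) (x : m → ℝ) (y : n → ℝ) :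
    x ⬝ᵥ matExp μ f *ᵥ y = ∫ ω, x ⬝ᵥ f ω *ᵥ y ∂μ := by
  simp only [dotProduct, mulVec, matExp, of_apply, Finset.mul_sum]
  rw [integral_finsetSum _ fun i _ => integrable_finsetSum _ fun j _ =>
    ((hf i j).mul_const (y j)).const_mul (x i)]
  refine Finset.sum_congr rfl fun i _ => ?_
  rw [integral_finsetSum _ fun j _ => ((hf i j).mul_const (y j)).const_mul (x i)]
  simp only [integral_const_mul, integral_mul_const]

lemma Matrix.PosSemidef.matExp [Fintype n] {f : Ω → Matrix n n ℝ}
    (hf : ∀ i j, Integrable (fun ω => f ω i j) μ) (hpsd : ∀ᵐ ω ∂μ, (f ω).PosSemidef) :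
    (matExp μ f).PosSemidef := by
  refine .of_dotProduct_mulVec_nonneg ?_ fun x => ?_
  · rw [IsHermitian, conjTranspose_eq_transpose_of_trivial, ← matExp_transpose]
    exact matExp_congr_ae (hpsd.mono fun ω hω => by
      simpa only [conjTranspose_eq_transpose_of_trivial] using hω.isHermitian.eq)
  · rw [dotProduct_matExp_mulVec hf]
    exact integral_nonneg_of_ae (hpsd.mono fun ω hω => hω.dotProduct_mulVec_nonneg x)

theorem matExp_cauchySchwarz_posSemidef [Fintype m] [Fintype n] [DecidableEq n] [Fintype k]
    [DecidableEq k] (A : Ω → Matrix m k ℝ) (B : Ω → Matrix n k ℝ) (V : Ω → Matrix k k ℝ)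
    (hV : ∀ᵐ ω ∂μ, (V ω).PosDef)
    (hAB : ∀ i j, Integrable (fun ω => (A ω * (B ω)ᵀ) i j) μ)
    (hAVA : ∀ i j, Integrable (fun ω => (A ω * V ω * (A ω)ᵀ) i j) μ)
    (hBVB : ∀ i j, Integrable (fun ω => (B ω * (V ω)⁻¹ * (B ω)ᵀ) i j) μ)
    (hG : IsUnit (matExp μ fun ω => B ω * (V ω)⁻¹ * (B ω)ᵀ)) :
    (matExp μ (fun ω => A ω * V ω * (A ω)ᵀ) -
      matExp μ (fun ω => A ω * (B ω)ᵀ) * (matExp μ fun ω => B ω * (V ω)⁻¹ * (B ω)ᵀ)⁻¹ *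
        (matExp μ fun ω => A ω * (B ω)ᵀ)ᵀ).PosSemidef := by
  have hBA : ∀ i j, Integrable (fun ω => (B ω * (A ω)ᵀ) i j) μ := fun i j => by
    convert hAB j i using 2 with ω
    rw [← transpose_apply (A ω * _), transpose_mul, transpose_transpose]
  have hblock := PosSemidef.matExp (integrable_fromBlocks_apply hAVA hAB hBA hBVB)
    (hV.mono fun ω hω => hω.posSemidef_fromBlocks_mul_transpose (A ω) (B ω))
  have hGpd : (matExp μ fun ω => B ω * (V ω)⁻¹ * (B ω)ᵀ).PosDef :=
    (PosSemidef.matExp hBVB (hV.mono fun ω hω => by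
      simpa only [conjTranspose_eq_transpose_of_trivial] using
        hω.posSemidef.inv.mul_mul_conjTranspose_same (B ω))).posDef_iff_isUnit.mpr hG
  have := hG.invertible
  have hcross : (matExp μ fun ω => B ω * (A ω)ᵀ) = (matExp μ fun ω => A ω * (B ω)ᵀ)ᴴ := by
    simp only [conjTranspose_eq_transpose_of_trivial, ← matExp_transpose, transpose_mul,
      transpose_transpose]
  rw [matExp_fromBlocks, hcross, PosDef.fromBlocks₂₂ _ _ hGpd] at hblock
  simpa only [conjTranspose_eq_transpose_of_trivial] using hblock

end MatExp

theorem gee_sandwich_efficiency_bound_general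
    {Ω : Type*} [MeasurableSpace Ω] (μ : Measure Ω)
    {d M : ℕ}
    (Φ U : Ω → Matrix (Fin d) (Fin M) ℝ) (V : Ω → Matrix (Fin M) (Fin M) ℝ)
    (hVpd : ∀ᵐ ω ∂μ, (V ω).PosDef)
    (hint1 : ∀ i j, Integrable (fun ω => (Φ ω * (U ω)ᵀ) i j) μ)
    (hint2 : ∀ i j, Integrable (fun ω => (Φ ω * V ω * (Φ ω)ᵀ) i j) μ)
    (hint3 : ∀ i j, Integrable (fun ω => (U ω * (V ω)⁻¹ * (U ω)ᵀ) i j) μ)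
    (W Sig G : Matrix (Fin d) (Fin d) ℝ)
    (hW : W = matExp μ fun ω => Φ ω * (U ω)ᵀ)
    (hSig : Sig = matExp μ fun ω => Φ ω * V ω * (Φ ω)ᵀ)
    (hG : G = matExp μ fun ω => U ω * (V ω)⁻¹ * (U ω)ᵀ)
    (hWinv : IsUnit W) (hGinv : IsUnit G) :
    (W⁻¹ * Sig * (W⁻¹)ᵀ - G⁻¹).PosSemidef := by
  subst hW hSig hG
  exact (matExp_cauchySchwarz_posSemidef Φ U V hVpd hint1 hint2 hint3 hGinv)
    |>.inv_mul_mul_inv_transpose_sub hWinv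

/-- Efficiency bound for GEE sandwich covariance matrices:
`W⁻¹ Σ (W⁻¹)ᵀ ⪰ G⁻¹` in the Loewner order. -/
theorem gee_sandwich_efficiency_bound
    {Ω : Type*} [MeasurableSpace Ω] (μ : Measure Ω) [IsProbabilityMeasure μ]
    {d M : ℕ}
    (Φ U : Ω → Matrix (Fin d) (Fin M) ℝ) (V : Ω → Matrix (Fin M) (Fin M) ℝ)
    (hVpd : ∀ᵐ ω ∂μ, (V ω).PosDef)
    (hint1 : ∀ i j, Integrable (fun ω => (Φ ω * (U ω)ᵀ) i j) μ)
    (hint2 : ∀ i j, Integrable (fun ω => (Φ ω * V ω * (Φ ω)ᵀ) i j) μ)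
    (hint3 : ∀ i j, Integrable (fun ω => (U ω * (V ω)⁻¹ * (U ω)ᵀ) i j) μ)
    (W Sig G : Matrix (Fin d) (Fin d) ℝ)
    (hW : W = matExp μ fun ω => Φ ω * (U ω)ᵀ)
    (hSig : Sig = matExp μ fun ω => Φ ω * V ω * (Φ ω)ᵀ)
    (hG : G = matExp μ fun ω => U ω * (V ω)⁻¹ * (U ω)ᵀ)
    (hWinv : IsUnit W) (hSigpd : Sig.PosDef) (hGinv : IsUnit G) :
    (W⁻¹ * Sig * (W⁻¹)ᵀ - G⁻¹).PosSemidef :=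
  gee_sandwich_efficiency_bound_general μ Φ U V hVpd hint1 hint2 hint3 W Sig G hW hSig hG hWinv
    hGinv
end

section
/- Let (Ω, F, P) be a probability space carrying random elements S (in a measurable state space), A (in a finite nonempty action space), a real-valued integrable random variable R, and S' (in the state space). Let κ be a Markov kernel from the action–state space to the state space such that the conditional distribution of S' given (A, S) is κ(A, S), and let r be a bounded measurable function with E[R | A, S] = r(A, S) almost surely. Let φ : A × S → ℝᵈ be bounded measurable and β* ∈ ℝᵈ be such that Q*(a, s) := φ(a,s)ᵀβ* satisfies the Bellman optimality equation Q*(a, s) = r(a, s) + γ ∫ max_{a'} φ(a', s')ᵀβ* dκ(a,s)(s') for all (a, s), where γ ∈ [0,1). Then for every bounded measurable Φ : A × S → ℝᵈ, the estimating equation is unbiased at β*: E[ Φ(A, S) · ( R + γ max_{a'} φ(a', S')ᵀβ* − φ(A, S)ᵀβ* ) ] = 0 ∈ ℝᵈ. -/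
/-!
Write `Y = R + γ max_{a'} Q*(a', S') - Q*(A, S)` for the temporal-difference residual. Conditioning
on `(A, S)` replaces `R` by `r(A, S)` and `max_{a'} Q*(a', S')` by its `κ(A, S)`-integral, so the
Bellman equation gives `E[Y | A, S] = 0`. Since `Φ(A, S)` is bounded and `(A, S)`-measurable, it
can be pulled out of the conditional expectation, whence `E[Y Φ(A, S)] = E[E[Y | A, S] Φ(A, S)] = 0`.
-/

open MeasureTheory ProbabilityTheory Matrix

lemma abs_dotProduct_le_norm_mul {n : Type*} [Fintype n] (v w : n → ℝ) :
    |v ⬝ᵥ w| ≤ ‖v‖ * ∑ i, |w i| :=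
  calc |v ⬝ᵥ w| ≤ ∑ i, |v i * w i| := Finset.abs_sum_le_sum_abs _ _
    _ ≤ ∑ i, ‖v‖ * |w i| := Finset.sum_le_sum fun i _ => by
        rw [abs_mul]
        exact mul_le_mul_of_nonneg_right (norm_le_pi_norm v i) (abs_nonneg _)
    _ = ‖v‖ * ∑ i, |w i| := (Finset.mul_sum _ _ _).symm

lemma exists_nonneg_bound_dotProduct {X n : Type*} [Fintype n] {φ : X → n → ℝ}
    (hφ : ∃ C, ∀ x, ‖φ x‖ ≤ C) (β : n → ℝ) : ∃ C, 0 ≤ C ∧ ∀ x, |φ x ⬝ᵥ β| ≤ C := by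
  obtain ⟨C, hC⟩ := hφ
  refine ⟨max C 0 * ∑ i, |β i|, by positivity, fun x => ?_⟩
  exact (abs_dotProduct_le_norm_mul _ _).trans
    (mul_le_mul_of_nonneg_right ((hC x).trans (le_max_left _ _)) (by positivity))

lemma abs_iSup_le_of_finite {ι : Type*} [Finite ι] {f : ι → ℝ} {C : ℝ} (hC : 0 ≤ C)
    (hf : ∀ i, |f i| ≤ C) : |⨆ i, f i| ≤ C := by
  rcases isEmpty_or_nonempty ι with hι | hι
  · simpa [Real.iSup_of_isEmpty] using hC
  · exact abs_le.2 ⟨(abs_le.1 (hf hι.some)).1.trans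
      (le_ciSup (Set.finite_range f).bddAbove hι.some),
      ciSup_le fun j => (abs_le.1 (hf j)).2⟩

section CondExp

variable {Ω E : Type*} {m m₀ : MeasurableSpace Ω} {μ : Measure Ω}

lemma condExp_add_const_mul_sub_of_stronglyMeasurable (hm : m ≤ m₀) [SigmaFinite (μ.trim hm)]
    {f g h : Ω → ℝ} (c : ℝ) (hf : Integrable f μ) (hg : Integrable g μ) (hh : Integrable h μ)
    (hh_m : StronglyMeasurable[m] h) :
    μ[fun ω => f ω + c * g ω - h ω | m] =ᵐ[μ] fun ω => μ[f | m] ω + c * μ[g | m] ω - h ω := by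
  have hsub := condExp_sub (hf.add (hg.smul c)) hh m
  have hadd := condExp_add hf (hg.smul c) m
  have hsmul := condExp_smul (μ := μ) c g m
  filter_upwards [hsub, hadd, hsmul] with ω h_sub h_add h_smul
  change μ[f + c • g - h | m] ω = _
  rw [h_sub, Pi.sub_apply, h_add, Pi.add_apply, h_smul, condExp_of_stronglyMeasurable hm hh_m hh]
  rfl

variable [NormedAddCommGroup E] [NormedSpace ℝ E] [CompleteSpace E]

lemma integral_smul_eq_zero_of_condExp_eq_zero (hm : m ≤ m₀) [SigmaFinite (μ.trim hm)]
    {Y : Ω → ℝ} {c : Ω → E} (hY : Integrable Y μ) (hYc : Integrable (Y • c) μ)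
    (hc : AEStronglyMeasurable[m] c μ) (hY_zero : μ[Y | m] =ᵐ[μ] 0) :
    ∫ ω, Y ω • c ω ∂μ = 0 := by
  have hpull := condExp_smul_of_aestronglyMeasurable_right hY hYc hc
  calc ∫ ω, Y ω • c ω ∂μ = ∫ ω, μ[Y • c | m] ω ∂μ := (integral_condExp hm).symm
    _ = ∫ ω, (0 : Ω → E) ω ∂μ := integral_congr_ae <| by
        filter_upwards [hpull, hY_zero] with ω h_pull h_zero
        simp [h_pull, h_zero]
    _ = 0 := integral_zero _ _

end CondExp

theorem estimating_equation_unbiased_general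
    {Ω 𝒮 𝒜 : Type*} [MeasurableSpace Ω] [MeasurableSpace 𝒮] [MeasurableSpace 𝒜]
    [Fintype 𝒜]
    (μ : Measure Ω) [IsProbabilityMeasure μ]
    (S : Ω → 𝒮) (A : Ω → 𝒜) (R : Ω → ℝ) (S' : Ω → 𝒮)
    (hS : Measurable S) (hA : Measurable A) (hS' : Measurable S')
    (hR : Integrable R μ)
    (κ : Kernel (𝒜 × 𝒮) 𝒮)
    {d : ℕ} (φ Φ : 𝒜 × 𝒮 → (Fin d → ℝ))
    (hφm : Measurable φ) (hφb : ∃ C, ∀ p, ‖φ p‖ ≤ C)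
    (hΦm : Measurable Φ) (hΦb : ∃ C, ∀ p, ‖Φ p‖ ≤ C)
    (r : 𝒜 × 𝒮 → ℝ)
    (γ : ℝ)
    (β : Fin d → ℝ)
    (hbellman : ∀ a : 𝒜, ∀ s : 𝒮,
      φ (a, s) ⬝ᵥ β = r (a, s) + γ * ∫ s', (⨆ a', φ (a', s') ⬝ᵥ β) ∂(κ (a, s)))
    (hcondR : μ[R | MeasurableSpace.comap (fun ω => (A ω, S ω)) inferInstance]
      =ᵐ[μ] fun ω => r (A ω, S ω))
    (hcondS' : ∀ g : 𝒮 → ℝ, Measurable g → (∃ C, ∀ x, |g x| ≤ C) →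
      μ[(fun ω => g (S' ω)) | MeasurableSpace.comap (fun ω => (A ω, S ω)) inferInstance]
        =ᵐ[μ] fun ω => ∫ s', g s' ∂(κ (A ω, S ω))) :
    (∫ ω, (R ω + γ * (⨆ a', φ (a', S' ω) ⬝ᵥ β) - φ (A ω, S ω) ⬝ᵥ β) • Φ (A ω, S ω) ∂μ)
      = 0 := by
  have hAS : Measurable fun ω => (A ω, S ω) := hA.prodMk hS
  have hm := hAS.comap_le
  have hQm : Measurable fun p => φ p ⬝ᵥ β := by fun_prop
  obtain ⟨C, hC0, hQb⟩ := exists_nonneg_bound_dotProduct hφb β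
  set M : 𝒮 → ℝ := fun s' => ⨆ a', φ (a', s') ⬝ᵥ β
  have hMm : Measurable M := Measurable.iSup fun a' => hQm.comp measurable_prodMk_left
  have hMb : ∀ s', |M s'| ≤ C := fun s' => abs_iSup_le_of_finite hC0 fun a' => hQb _
  have hMS' : Integrable (fun ω => M (S' ω)) μ :=
    .of_bound (hMm.comp hS').aestronglyMeasurable C (ae_of_all _ fun ω => hMb _)
  have hQAS : Integrable (fun ω => φ (A ω, S ω) ⬝ᵥ β) μ :=
    .of_bound (hQm.comp hAS).aestronglyMeasurable C (ae_of_all _ fun ω => hQb _)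
  have hY := (hR.add (hMS'.const_mul γ)).sub hQAS
  have hY_zero : μ[fun ω => R ω + γ * M (S' ω) - φ (A ω, S ω) ⬝ᵥ β
      | MeasurableSpace.comap (fun ω => (A ω, S ω)) inferInstance] =ᵐ[μ] 0 := by
    filter_upwards [condExp_add_const_mul_sub_of_stronglyMeasurable hm γ hR hMS' hQAS
        (hQm.comp (comap_measurable _)).stronglyMeasurable,
      hcondR, hcondS' M hMm ⟨C, hMb⟩] with ω h_split h_R h_M
    rw [h_split, h_R, h_M, hbellman]
    exact sub_self _
  obtain ⟨D, hD⟩ := hΦb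
  exact integral_smul_eq_zero_of_condExp_eq_zero hm hY
    (hY.smul_bdd D (hΦm.comp hAS).aestronglyMeasurable (ae_of_all _ fun ω => hD _))
    (hΦm.comp (comap_measurable _)).aestronglyMeasurable hY_zero

/-- Unbiasedness of the estimating equation at the Bellman-optimal parameter `β*`:
for any bounded measurable instrument `Φ`,
`E[Φ(A, S) · (R + γ max_{a'} φ(a', S')ᵀβ* − φ(A, S)ᵀβ*)] = 0`. -/
theorem estimating_equation_unbiased
    {Ω 𝒮 𝒜 : Type*} [MeasurableSpace Ω] [MeasurableSpace 𝒮] [MeasurableSpace 𝒜]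
    [Fintype 𝒜] [Nonempty 𝒜]
    (μ : Measure Ω) [IsProbabilityMeasure μ]
    (S : Ω → 𝒮) (A : Ω → 𝒜) (R : Ω → ℝ) (S' : Ω → 𝒮)
    (hS : Measurable S) (hA : Measurable A) (hS' : Measurable S')
    (hR : Integrable R μ)
    (κ : Kernel (𝒜 × 𝒮) 𝒮) [IsMarkovKernel κ]
    {d : ℕ} (φ Φ : 𝒜 × 𝒮 → (Fin d → ℝ))
    (hφm : Measurable φ) (hφb : ∃ C, ∀ p, ‖φ p‖ ≤ C)
    (hΦm : Measurable Φ) (hΦb : ∃ C, ∀ p, ‖Φ p‖ ≤ C)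
    (r : 𝒜 × 𝒮 → ℝ) (hrm : Measurable r) (hrb : ∃ C, ∀ p, |r p| ≤ C)
    (γ : ℝ) (hγ0 : 0 ≤ γ) (hγ1 : γ < 1)
    (β : Fin d → ℝ)
    (hbellman : ∀ a : 𝒜, ∀ s : 𝒮,
      φ (a, s) ⬝ᵥ β = r (a, s) + γ * ∫ s', (⨆ a', φ (a', s') ⬝ᵥ β) ∂(κ (a, s)))
    (hcondR : μ[R | MeasurableSpace.comap (fun ω => (A ω, S ω)) inferInstance]
      =ᵐ[μ] fun ω => r (A ω, S ω))
    (hcondS' : ∀ g : 𝒮 → ℝ, Measurable g → (∃ C, ∀ x, |g x| ≤ C) →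
      μ[(fun ω => g (S' ω)) | MeasurableSpace.comap (fun ω => (A ω, S ω)) inferInstance]
        =ᵐ[μ] fun ω => ∫ s', g s' ∂(κ (A ω, S ω))) :
    (∫ ω, (R ω + γ * (⨆ a', φ (a', S' ω) ⬝ᵥ β) - φ (A ω, S ω) ⬝ᵥ β) • Φ (A ω, S ω) ∂μ)
      = 0 :=
  estimating_equation_unbiased_general μ S A R S' hS hA hS' hR κ φ Φ hφm hφb hΦm hΦb r γ β hbellman
    hcondR hcondS'
end

section
/- Let x and y be square-integrable random vectors in ℝᴹ on a probability space, let γ ∈ [0,1), and suppose there exist constants c > 0 and K > 0 such that E‖x‖² − γ² E‖y‖² ≥ c, E‖x‖² ≤ K and E‖y‖² ≤ K. Then E‖x‖² − γ |E⟨x, y⟩| ≥ c^{3/2} / ((1 + γ) √K). (This is the key quantitative step in verifying the stability assumption for GFQI under ε-greedy data collection: with x = the weighted feature vector φ̃ᵀν of the current state–action pairs in a cluster and y = that of the next states under the optimal policy, it shows the coercivity constant of W(Φ) is bounded below whenever the minimum eigenvalue condition λ_min(E[φφᵀ − γ²φ'φ'ᵀ]) ≥ c* holds.) -/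
open MeasureTheory RealInnerProductSpace

/-!
Identifying `x, y` with elements `X, Y` of `L²`, Cauchy–Schwarz bounds `|E⟨x, y⟩|` by
`a b` with `a = ‖X‖`, `b = ‖Y‖`, so it suffices to bound `a² - γ a b` below. The key is the
factorisation `(a² - γ² b²) a = (a² - γ a b) (a + γ b)`: the left side is at least `c √c`
because `a ≥ √c`, and `a + γ b ≤ (1 + γ) √K`.
-/

theorem Real.rpow_three_halves {c : ℝ} (hc : 0 ≤ c) : c ^ ((3 : ℝ) / 2) = c * √c := by
  rw [show (3 : ℝ) / 2 = 1 + 1 / 2 by norm_num, Real.rpow_add' hc (by norm_num), Real.rpow_one,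
    Real.sqrt_eq_rpow]

theorem rpow_three_halves_div_le_sq_sub_mul_mul {a b γ c K : ℝ} (ha : 0 ≤ a) (hb : 0 ≤ b)
    (hγ : 0 ≤ γ) (hc : 0 < c) (hcab : c ≤ a ^ 2 - γ ^ 2 * b ^ 2) (haK : a ^ 2 ≤ K)
    (hbK : b ^ 2 ≤ K) :
    c ^ ((3 : ℝ) / 2) / ((1 + γ) * √K) ≤ a ^ 2 - γ * (a * b) := by
  have hca : √c ≤ a := (Real.sqrt_le_left ha).mpr (by nlinarith)
  have hγba : γ * b ≤ a := (pow_le_pow_iff_left₀ (by positivity) ha two_ne_zero).mp (by nlinarith)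
  have hsum : a + γ * b ≤ (1 + γ) * √K := by
    have haK' : a ≤ √K := Real.le_sqrt_of_sq_le haK
    have hbK' : b ≤ √K := Real.le_sqrt_of_sq_le hbK
    nlinarith
  rw [Real.rpow_three_halves hc.le]
  refine div_le_of_le_mul₀ (by positivity) (by nlinarith) ?_
  calc c * √c ≤ (a ^ 2 - γ ^ 2 * b ^ 2) * a := mul_le_mul hcab hca (by positivity) (by linarith)
    _ = (a ^ 2 - γ * (a * b)) * (a + γ * b) := by ring
    _ ≤ (a ^ 2 - γ * (a * b)) * ((1 + γ) * √K) := by gcongr; nlinarith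

namespace MeasureTheory.MemLp

variable {Ω E : Type*} [MeasurableSpace Ω] {μ : Measure Ω}
  [NormedAddCommGroup E] [InnerProductSpace ℝ E]

theorem integral_inner_eq_inner_toLp {x y : Ω → E} (hx : MemLp x 2 μ) (hy : MemLp y 2 μ) :
    ∫ ω, ⟪x ω, y ω⟫ ∂μ = ⟪hx.toLp x, hy.toLp y⟫ := by
  rw [L2.inner_def]
  refine integral_congr_ae ?_
  filter_upwards [hx.coeFn_toLp, hy.coeFn_toLp] with ω hxω hyω
  rw [hxω, hyω]

theorem integral_norm_sq_eq_norm_toLp_sq {x : Ω → E} (hx : MemLp x 2 μ) :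
    ∫ ω, ‖x ω‖ ^ 2 ∂μ = ‖hx.toLp x‖ ^ 2 := by
  simp only [← real_inner_self_eq_norm_sq]
  exact hx.integral_inner_eq_inner_toLp hx

end MeasureTheory.MemLp

theorem stability_coercivity_bound_general
    {Ω : Type*} [MeasurableSpace Ω] (μ : Measure Ω)
    {M : ℕ} (x y : Ω → EuclideanSpace ℝ (Fin M))
    (hx : MemLp x 2 μ) (hy : MemLp y 2 μ)
    (γ : ℝ) (hγ0 : 0 ≤ γ)
    (c K : ℝ) (hc : 0 < c)
    (h1 : c ≤ (∫ ω, ‖x ω‖ ^ 2 ∂μ) - γ ^ 2 * ∫ ω, ‖y ω‖ ^ 2 ∂μ)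
    (h2 : (∫ ω, ‖x ω‖ ^ 2 ∂μ) ≤ K) (h3 : (∫ ω, ‖y ω‖ ^ 2 ∂μ) ≤ K) :
    c ^ ((3 : ℝ) / 2) / ((1 + γ) * Real.sqrt K) ≤
      (∫ ω, ‖x ω‖ ^ 2 ∂μ) - γ * |∫ ω, ⟪x ω, y ω⟫ ∂μ| := by
  rw [hx.integral_norm_sq_eq_norm_toLp_sq] at h1 h2 ⊢
  rw [hy.integral_norm_sq_eq_norm_toLp_sq] at h1 h3
  rw [hx.integral_inner_eq_inner_toLp hy]
  calc c ^ ((3 : ℝ) / 2) / ((1 + γ) * √K)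
      ≤ ‖hx.toLp x‖ ^ 2 - γ * (‖hx.toLp x‖ * ‖hy.toLp y‖) :=
        rpow_three_halves_div_le_sq_sub_mul_mul (norm_nonneg _) (norm_nonneg _) hγ0 hc h1 h2 h3
    _ ≤ _ := by gcongr; exact abs_real_inner_le_norm _ _

/-- Quantitative coercivity step used to verify the stability assumption for GFQI:
if `E‖x‖² − γ² E‖y‖² ≥ c` with `E‖x‖² ≤ K` and `E‖y‖² ≤ K`, then
`E‖x‖² − γ |E⟨x, y⟩| ≥ c^{3/2} / ((1 + γ) √K)`. -/
theorem stability_coercivity_bound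
    {Ω : Type*} [MeasurableSpace Ω] (μ : Measure Ω) [IsProbabilityMeasure μ]
    {M : ℕ} (x y : Ω → EuclideanSpace ℝ (Fin M))
    (hx : MemLp x 2 μ) (hy : MemLp y 2 μ)
    (γ : ℝ) (hγ0 : 0 ≤ γ) (hγ1 : γ < 1)
    (c K : ℝ) (hc : 0 < c) (hK : 0 < K)
    (h1 : c ≤ (∫ ω, ‖x ω‖ ^ 2 ∂μ) - γ ^ 2 * ∫ ω, ‖y ω‖ ^ 2 ∂μ)
    (h2 : (∫ ω, ‖x ω‖ ^ 2 ∂μ) ≤ K) (h3 : (∫ ω, ‖y ω‖ ^ 2 ∂μ) ≤ K) :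
    c ^ ((3 : ℝ) / 2) / ((1 + γ) * Real.sqrt K) ≤
      (∫ ω, ‖x ω‖ ^ 2 ∂μ) - γ * |∫ ω, ⟪x ω, y ω⟫ ∂μ| :=
  stability_coercivity_bound_general μ x y hx hy γ hγ0 c K hc h1 h2 h3
end
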